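/- arXiv:2102.04281 — 2 statements merged into one kernel-verified Lean document; each statement's English description precedes it below -/
import Mathlib

section
/- For a regular simplicial set K, a non-degenerate n-simplex x, and two distinct words s ≠ s' of the same length in the free monoid on {i,p}, the chains d_s x and d_{s'} x have disjoint supports: d_s x ∧ d_{s'} x = 0. -/
/-- A simplicial set, with `ℕ`-indexed face and degeneracy operators (out-of-range
indices give junk values), subject to the simplicial identities. -/
structure SimpSet where
  X : ℕ → Type
  face : (n : ℕ) → ℕ → X (n + 1) → X n
  degen : (n : ℕ) → ℕ → X n → X (n + 1)
  face_face : ∀ (n i j : ℕ) (x : X (n + 2)), i < j → j ≤ n + 2 →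
    face n i (face (n + 1) j x) = face n (j - 1) (face (n + 1) i x)
  degen_degen : ∀ (n i j : ℕ) (x : X n), i ≤ j → j ≤ n →
    degen (n + 1) i (degen n j x) = degen (n + 1) (j + 1) (degen n i x)
  face_degen_lt : ∀ (n i j : ℕ) (x : X (n + 1)), i < j → j ≤ n + 1 →
    face (n + 1) i (degen (n + 1) j x) = degen n (j - 1) (face n i x)
  face_degen_self : ∀ (n j : ℕ) (x : X n), j ≤ n →
    face n j (degen n j x) = x ∧ face n (j + 1) (degen n j x) = x
  face_degen_gt : ∀ (n i j : ℕ) (x : X (n + 1)), j + 1 < i → i ≤ n + 2 → j ≤ n →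
    face (n + 1) i (degen (n + 1) j x) = degen n j (face n (i - 1) x)

namespace SimpSet

variable (S : SimpSet)

/-- The cells (simplices of all dimensions) of a simplicial set. -/
def Cell := Σ n, S.X n

/-- A simplex is degenerate when it is the image of a degeneracy operator. -/
def Degenerate : S.Cell → Prop
  | ⟨0, _⟩ => False
  | ⟨n + 1, x⟩ => ∃ j ≤ n, ∃ y : S.X n, x = S.degen n j y

/-- The non-degenerate simplices. -/
def ND := { c : S.Cell // ¬ S.Degenerate c }

noncomputable instance : DecidableEq S.ND := Classical.decEq _

/-- The reduced chain complex of `S` in a fixed degree, totalized over all degrees: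
formal `ℤ`-combinations of non-degenerate simplices. -/
abbrev Chain := S.ND →₀ ℤ

/-- The `i`-th face, as an operation on cells (junk in dimension 0). -/
def face' (i : ℕ) : S.Cell → S.Cell
  | ⟨0, x⟩ => ⟨0, x⟩
  | ⟨n + 1, x⟩ => ⟨n, S.face n i x⟩

open Classical in
/-- The class of a cell in the reduced chain complex: degenerate simplices count as 0. -/
noncomputable def toChain (c : S.Cell) : S.Chain :=
  if h : S.Degenerate c then 0 else Finsupp.single ⟨c, h⟩ 1

/-- Iterated faces `d_{i₁} (d_{i₂} ⋯ (d_{i_k} c))` along a list `(i₁, …, i_k)`. -/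
def applyFaces (l : List ℕ) (c : S.Cell) : S.Cell := l.foldr S.face' c

/-- The signature of a strictly increasing sequence of natural numbers (encoded as a
finset): the letter `p` (= `true`) for even entries and `i` (= `false`) for odd ones. -/
def sigOf (T : Finset ℕ) : List Bool :=
  (T.sort (· ≤ ·)).map fun m => decide (m % 2 = 0)

/-- `d_s x` on a single `n`-simplex: the sum, over all strictly increasing sequences of
entries `≤ n` with signature `s` (of length `≤ n`), of the corresponding iterated face. -/
noncomputable def dwordCell (s : List Bool) (c : S.Cell) : S.Chain :=
  ∑ T ∈ (Finset.range (c.1 + 1)).powerset.filter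
      (fun T => sigOf T = s ∧ s.length ≤ c.1),
    S.toChain (S.applyFaces (T.sort (· ≤ ·)) c)

/-- `d_s`, extended linearly to chains. -/
noncomputable def dword (s : List Bool) (ch : S.Chain) : S.Chain :=
  ch.sum fun nd k => k • S.dwordCell s nd.1

/-- A simplicial set is regular when for every non-degenerate simplex the iterated faces
along distinct strictly increasing index sequences (of equal length) are distinct. -/
def Regular : Prop :=
  ∀ c : S.Cell, ¬ S.Degenerate c →
    ∀ T T' : Finset ℕ, T ⊆ Finset.range (c.1 + 1) → T' ⊆ Finset.range (c.1 + 1) →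
      T.card = T'.card → T.card ≤ c.1 →
      S.applyFaces (T.sort (· ≤ ·)) c = S.applyFaces (T'.sort (· ≤ ·)) c → T = T'

end SimpSet


lemma SimpSet.mem_support_dwordCell (S : SimpSet) (s : List Bool) (c : S.Cell)
    (y : S.ND) (hy : y ∈ (S.dwordCell s c).support) :
    ∃ T ∈ (Finset.range (c.1 + 1)).powerset.filter
      (fun T => SimpSet.sigOf T = s ∧ s.length ≤ c.1),
      S.applyFaces (T.sort (· ≤ ·)) c = y.1 := by
  obtain ⟨T, hT, hyT⟩ := Finset.mem_biUnion.1 (Finsupp.support_finset_sum hy)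
  refine ⟨T, hT, ?_⟩
  unfold SimpSet.toChain at hyT
  split at hyT
  · simp at hyT
  · erw [Finsupp.support_single_ne_zero _ one_ne_zero] at hyT
    replace hyT := Finset.mem_singleton.1 hyT
    rw [hyT]

lemma SimpSet.card_of_sig (T : Finset ℕ) (s : List Bool)
    (h : SimpSet.sigOf T = s) : T.card = s.length := by
  rw [← h]; simp [SimpSet.sigOf]

/-- For a regular simplicial set `K`, a non-degenerate `n`-simplex `x`, and two distinct
words `s ≠ s'` of the same length in the free monoid on `{i, p}`, the chains `d_s x` and
`d_{s'} x` have disjoint supports (`d_s x ∧ d_{s'} x = 0`). -/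
theorem dword_disjoint_support (S : SimpSet) (hreg : S.Regular) (nd : S.ND)
    (s s' : List Bool) (hne : s ≠ s') (hlen : s.length = s'.length) :
    Disjoint (S.dword s (Finsupp.single nd 1)).support
      (S.dword s' (Finsupp.single nd 1)).support := by
  classical
  rw [Finset.disjoint_left]
  intro y hy hy'
  have hsum : ∀ t : List Bool, S.dword t (Finsupp.single nd 1) = S.dwordCell t nd.1 := by
    intro t
    rw [SimpSet.dword, Finsupp.sum_single_index (by simp)]
    simp
  rw [hsum] at hy hy'
  obtain ⟨T, hT, hTy⟩ := S.mem_support_dwordCell s nd.1 y hy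
  obtain ⟨T', hT', hTy'⟩ := S.mem_support_dwordCell s' nd.1 y hy'
  simp only [Finset.mem_filter, Finset.mem_powerset] at hT hT'
  obtain ⟨hTsub, hTsig, hTlen⟩ := hT
  obtain ⟨hTsub', hTsig', _⟩ := hT'
  have hcard : T.card = T'.card := by
    rw [SimpSet.card_of_sig T s hTsig, SimpSet.card_of_sig T' s' hTsig', hlen]
  have hTT : T = T' := hreg nd.1 nd.2 T T' hTsub hTsub' hcard
    (by rw [SimpSet.card_of_sig T s hTsig]; exact hTlen) (by rw [hTy, hTy'])
  exact hne (by rw [← hTsig, ← hTsig', hTT])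
end

section
/- Let f : M → N be a morphism of augmented directed complexes admitting unitary loop-free bases B_M, B_N. Then f is quasi-rigid (for every basis element b with f(b) ≠ 0, f(b) ∈ B_N and ν(f)⟨b⟩ = ⟨f(b)⟩) if and only if for every n and every b ∈ (B_M)_n with f_n(b) ≠ 0 one has f_n(b) ∈ B_N and f_k(⟨b⟩⁻_k) ∧ f_k(⟨b⟩⁺_k) = 0 for all k < n. -/
/-! Chains in an augmented directed complex with basis.  An augmented directed complex
with basis `B` is encoded by a degree function `deg : B → ℕ`, a differential given on
basis elements `diff : B → (B →₀ ℤ)` and an augmentation `aug : B → ℤ` on the basis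
(the predicate `IsADC` expresses the chain-complex and augmentation axioms).
A *chain* is a finitely supported function `B → ℕ`, i.e. a nonnegative combination of
basis elements. -/

namespace Chains

/-- Positive part of an integral combination, as a chain. -/
noncomputable def posPart {B : Type*} (x : B →₀ ℤ) : B →₀ ℕ :=
  x.mapRange Int.toNat (by simp)

/-- Negative part of an integral combination, as a chain. -/
noncomputable def negPart {B : Type*} (x : B →₀ ℤ) : B →₀ ℕ :=
  x.mapRange (fun k => (-k).toNat) (by simp)

/-- Inclusion of chains into integral combinations. -/
noncomputable def toInt {B : Type*} (a : B →₀ ℕ) : B →₀ ℤ :=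
  a.mapRange (Nat.cast : ℕ → ℤ) (by simp)

/-- Pointwise minimum (`∧`) of chains. -/
noncomputable def cmin {B : Type*} [DecidableEq B] (a a' : B →₀ ℕ) : B →₀ ℕ :=
  Finsupp.zipWith min (by simp) a a'

/-- Pointwise maximum (`∨`) of chains. -/
noncomputable def cmax {B : Type*} [DecidableEq B] (a a' : B →₀ ℕ) : B →₀ ℕ :=
  Finsupp.zipWith max (by simp) a a'

/-- Truncated subtraction (`∖`) of chains. -/
noncomputable def csub {B : Type*} [DecidableEq B] (a a' : B →₀ ℕ) : B →₀ ℕ :=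
  Finsupp.zipWith (fun m n => m - n) (by simp) a a'

/-- The differential extended to chains. -/
noncomputable def bdry {B : Type*} (diff : B → B →₀ ℤ) (a : B →₀ ℕ) : B →₀ ℤ :=
  a.sum fun b k => (k : ℤ) • diff b

/-- The positive (`α = true`) and negative (`α = false`) part of the differential. -/
noncomputable def bdryP {B : Type*} (diff : B → B →₀ ℤ) (α : Bool) (a : B →₀ ℕ) :
    B →₀ ℕ :=
  if α then posPart (bdry diff a) else negPart (bdry diff a)

open Classical in
/-- The degree-`k` homogeneous part `(a)ₖ` of a chain. -/
noncomputable def homog {B : Type*} (deg : B → ℕ) (k : ℕ) (a : B →₀ ℕ) : B →₀ ℕ :=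
  a.filter fun b => deg b = k

open Classical in
/-- The `k`-rest `rₖ(a)`: the part of a chain in degrees `≤ k`. -/
noncomputable def trunc {B : Type*} (deg : B → ℕ) (k : ℕ) (a : B →₀ ℕ) : B →₀ ℕ :=
  a.filter fun b => deg b ≤ k

/-- One step of the source/target operator: `∂^α((a)_{n+1}) + rₙ(a)`. -/
noncomputable def dstep {B : Type*} [DecidableEq B] (deg : B → ℕ) (diff : B → B →₀ ℤ)
    (α : Bool) (n : ℕ) (a : B →₀ ℕ) : B →₀ ℕ :=
  bdryP diff α (homog deg (n + 1) a) + trunc deg n a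

/-- Auxiliary downward recursion for the source/target operators. -/
noncomputable def dmapAux {B : Type*} [DecidableEq B] (deg : B → ℕ) (diff : B → B →₀ ℤ)
    (α : Bool) : ℕ → ℕ → (B →₀ ℕ) → (B →₀ ℕ)
  | _, 0, a => a
  | n, k + 1, a => dstep deg diff α n (dmapAux deg diff α (n + 1) k a)

/-- Degree of a chain (0 for the zero chain). -/
def degC {B : Type*} (deg : B → ℕ) (a : B →₀ ℕ) : ℕ := a.support.sup deg

/-- The source (`α = false`) and target (`α = true`) operators `d^α_n` on chains:
`d^α_n a = a` if `|a| ≤ n`, and otherwise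
`d^α_n a = ∂^α((d^α_{n+1}a)_{n+1}) + rₙ(d^α_{n+1}a)`. -/
noncomputable def dmap {B : Type*} [DecidableEq B] (deg : B → ℕ) (diff : B → B →₀ ℤ)
    (α : Bool) (n : ℕ) (a : B →₀ ℕ) : B →₀ ℕ :=
  dmapAux deg diff α n (degC deg a - n) a

/-- The augmentation evaluated on a chain. -/
noncomputable def augC {B : Type*} (aug : B → ℤ) (a : B →₀ ℕ) : ℤ :=
  a.sum fun b k => (k : ℤ) * aug b

/-- `e(a) := e(d⁺₀ a)`. -/
noncomputable def eC {B : Type*} [DecidableEq B] (deg : B → ℕ) (diff : B → B →₀ ℤ)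
    (aug : B → ℤ) (a : B →₀ ℕ) : ℤ :=
  augC aug (dmap deg diff true 0 a)

/-- A chain is coherent when `e(a) = 1`. -/
def Coherent {B : Type*} [DecidableEq B] (deg : B → ℕ) (diff : B → B →₀ ℤ)
    (aug : B → ℤ) (a : B →₀ ℕ) : Prop :=
  eC deg diff aug a = 1

/-- The axioms of an augmented directed complex (with basis): the differential decreases
degree by one, vanishes in degree 0, squares to zero, and is annihilated by the
augmentation. -/
structure IsADC {B : Type*} (deg : B → ℕ) (diff : B → B →₀ ℤ) (aug : B → ℤ) : Prop where
  diff_deg : ∀ b b', b' ∈ (diff b).support → deg b' + 1 = deg b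
  diff_zero : ∀ b, deg b = 0 → diff b = 0
  diff_sq : ∀ b, ((diff b).sum fun b' k => k • diff b') = 0
  aug_diff : ∀ b, deg b = 1 → ((diff b).sum fun b' k => k * aug b') = 0

/-- The basis is unitary when the table `⟨b⟩` of every basis element is coherent,
i.e. `e(d^α₀⟨b⟩) = 1` for both `α`. -/
def Unitary {B : Type*} [DecidableEq B] (deg : B → ℕ) (diff : B → B →₀ ℤ)
    (aug : B → ℤ) : Prop :=
  ∀ (b : B) (α : Bool), augC aug (dmap deg diff α 0 (Finsupp.single b 1)) = 1

/-- The elementary relation `x ⊙ₙ y` on basis elements of degree `≥ n`: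
`⟨x⟩ₙ⁻ ∧ ⟨y⟩ₙ⁺ ≠ 0`. -/
def relO {B : Type*} [DecidableEq B] (deg : B → ℕ) (diff : B → B →₀ ℤ)
    (n : ℕ) (x y : B) : Prop :=
  n ≤ deg x ∧ n ≤ deg y ∧
    ¬ Disjoint (dmap deg diff false n (Finsupp.single x 1)).support
        (dmap deg diff true n (Finsupp.single y 1)).support

/-- The basis is loop-free when for every `n` the reflexive-transitive closure of `⊙ₙ`
is a partial order (i.e. is antisymmetric). -/
def LoopFree {B : Type*} [DecidableEq B] (deg : B → ℕ) (diff : B → B →₀ ℤ) : Prop :=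
  ∀ (n : ℕ) (x y : B), Relation.ReflTransGen (relO deg diff n) x y →
    Relation.ReflTransGen (relO deg diff n) y x → x = y

/-- The composition degree `|a|_c` of a chain, an element of `ℤ` (with value `-1` when
the defining set is empty): `sup{ n | ∃ b ≠ b' ∈ supp a, |b| ≥ |b'| > n }`. -/
noncomputable def compDeg {B : Type*} (deg : B → ℕ) (a : B →₀ ℕ) : ℤ :=
  sSup (insert (-1) {n : ℤ | ∃ b ∈ a.support, ∃ b' ∈ a.support,
    b ≠ b' ∧ (deg b' : ℤ) ≤ (deg b : ℤ) ∧ n < (deg b' : ℤ)})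

/-- The `n`-composition of chains: `x *ₙ y := (x - d⁻ₙ(x) + y)₊`. -/
noncomputable def compC {B : Type*} [DecidableEq B] (deg : B → ℕ) (diff : B → B →₀ ℤ)
    (n : ℕ) (x y : B →₀ ℕ) : B →₀ ℕ :=
  posPart (toInt x - toInt (dmap deg diff false n x) + toInt y)

/-- Iterated `n`-composition of a list of chains (associating to the right). -/
noncomputable def compList {B : Type*} [DecidableEq B] (deg : B → ℕ)
    (diff : B → B →₀ ℤ) (n : ℕ) : List (B →₀ ℕ) → (B →₀ ℕ)
  | [] => 0
  | [x] => x
  | x :: y :: l => compC deg diff n x (compList deg diff n (y :: l))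

end Chains

namespace Chains

/-- The linear extension of a map given on basis elements to integral combinations. -/
noncomputable def fext {BM BN : Type*} (f : BM → BN →₀ ℤ) (x : BM →₀ ℤ) : BN →₀ ℤ :=
  x.sum fun b k => k • f b

/-- `f` encodes a morphism of augmented directed complexes: it preserves degrees,
positivity (images of basis elements are chains), commutes with the differentials and
with the augmentations. -/
structure IsADCHom {BM BN : Type*}
    (degM : BM → ℕ) (diffM : BM → BM →₀ ℤ) (augM : BM → ℤ)
    (degN : BN → ℕ) (diffN : BN → BN →₀ ℤ) (augN : BN → ℤ)
    (f : BM → BN →₀ ℤ) : Prop where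
  deg_pres : ∀ b b', b' ∈ (f b).support → degN b' = degM b
  pos : ∀ b b', 0 ≤ f b b'
  comm_diff : ∀ b, fext f (diffM b) = (f b).sum fun b' k => k • diffN b'
  comm_aug : ∀ b, degM b = 0 → ((f b).sum fun b' k => k * augN b') = augM b

/-- `f` is quasi-rigid: every basis element `b` with `f(b) ≠ 0` is sent to a basis
element `b'` of `B_N`, and `ν(f)⟨b⟩ = ⟨f(b)⟩`, i.e. `f` sends each component of the
Steiner table of `b` to the corresponding component of the table of `b'`. -/
def QuasiRigid {BM BN : Type*} [DecidableEq BM] [DecidableEq BN]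
    (degM : BM → ℕ) (diffM : BM → BM →₀ ℤ)
    (degN : BN → ℕ) (diffN : BN → BN →₀ ℤ) (f : BM → BN →₀ ℤ) : Prop :=
  ∀ b : BM, f b ≠ 0 → ∃ b' : BN, f b = Finsupp.single b' 1 ∧
    ∀ (k : ℕ) (α : Bool),
      fext f (toInt (dmap degM diffM α k (Finsupp.single b 1))) =
        toInt (dmap degN diffN α k (Finsupp.single b' 1))

end Chains

namespace Chains

variable {B BM BN : Type*}

@[simp] lemma toInt_apply (a : B →₀ ℕ) (b : B) : toInt a b = (a b : ℤ) := by
  simp [toInt]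

@[simp] lemma posPart_apply (x : B →₀ ℤ) (b : B) : posPart x b = (x b).toNat := by
  simp [posPart]

@[simp] lemma negPart_apply (x : B →₀ ℤ) (b : B) : negPart x b = (-(x b)).toNat := by
  simp [negPart]

@[simp] lemma cmin_apply [DecidableEq B] (a a' : B →₀ ℕ) (b : B) :
    cmin a a' b = min (a b) (a' b) := by
  simp [cmin]

/-- The linear extension as a linear map. -/
noncomputable def fextHom (f : BM → BN →₀ ℤ) : (BM →₀ ℤ) →ₗ[ℤ] (BN →₀ ℤ) :=
  Finsupp.lsum ℤ fun b => LinearMap.toSpanSingleton ℤ _ (f b)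

lemma fextHom_apply (f : BM → BN →₀ ℤ) (x : BM →₀ ℤ) :
    fextHom f x = x.sum fun b k => k • f b := rfl

lemma fext_eq_fextHom (f : BM → BN →₀ ℤ) (x : BM →₀ ℤ) : fext f x = fextHom f x := rfl

lemma fextHom_single (f : BM → BN →₀ ℤ) (b : BM) (k : ℤ) :
    fextHom f (Finsupp.single b k) = k • f b := by
  rw [fextHom_apply, Finsupp.sum_single_index (by simp)]

lemma bdry_eq (diff : B → B →₀ ℤ) (a : B →₀ ℕ) :
    bdry diff a = fextHom diff (toInt a) := by
  rw [fextHom_apply, bdry, toInt, Finsupp.sum_mapRange_index (by simp)]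

lemma toInt_posPart_sub_negPart (x : B →₀ ℤ) :
    toInt (posPart x) - toInt (negPart x) = x := by
  ext b; simp

lemma toInt_posPart_of_nonneg (y : B →₀ ℤ) (h : ∀ c, 0 ≤ y c) :
    toInt (posPart y) = y := by
  ext c; have := h c; simp; omega

@[simp] lemma posPart_toInt (a : B →₀ ℕ) : posPart (toInt a) = a := by
  ext c; simp

lemma eq_posPart_negPart [DecidableEq B] (x : B →₀ ℤ) (p q : B →₀ ℕ)
    (h : toInt p - toInt q = x) (hpq : cmin p q = 0) :
    p = posPart x ∧ q = negPart x := by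
  have hc : ∀ c, (p c : ℤ) - q c = x c := fun c => by
    rw [← h]; simp
  have hm : ∀ c, min (p c) (q c) = 0 := fun c => by
    have := Finsupp.ext_iff.mp hpq c; simpa using this
  constructor <;> ext c <;> [skip; skip] <;>
    · have h1 := hc c; have h2 := hm c; simp; omega

end Chains
namespace Chains

variable {B BM BN : Type*}

lemma fextHom_sq (diff : B → B →₀ ℤ)
    (hsq : ∀ c, fextHom diff (diff c) = 0) (x : B →₀ ℤ) :
    fextHom diff (fextHom diff x) = 0 := by
  rw [fextHom_apply diff x, map_finsuppSum]
  refine Finset.sum_eq_zero fun b _ => ?_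
  simp [hsq]

lemma fextHom_comm {degM : BM → ℕ} {diffM : BM → BM →₀ ℤ} {augM : BM → ℤ}
    {degN : BN → ℕ} {diffN : BN → BN →₀ ℤ} {augN : BN → ℤ}
    {f : BM → BN →₀ ℤ} (hf : IsADCHom degM diffM augM degN diffN augN f)
    (x : BM →₀ ℤ) :
    fextHom f (fextHom diffM x) = fextHom diffN (fextHom f x) := by
  have : (fextHom f).comp (fextHom diffM) = (fextHom diffN).comp (fextHom f) := by
    apply Finsupp.lhom_ext
    intro b k
    simp only [LinearMap.comp_apply, fextHom_single, map_smul]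
    congr 1
    rw [← fext_eq_fextHom, hf.comm_diff b, fextHom_apply]
  exact DFunLike.congr_fun this x

/-- Homogeneity of a chain. -/
def HomogD (deg : B → ℕ) (k : ℕ) (a : B →₀ ℕ) : Prop := ∀ c ∈ a.support, deg c = k

lemma homog_eq_self {deg : B → ℕ} {k : ℕ} {a : B →₀ ℕ} (h : HomogD deg k a) :
    homog deg k a = a := by
  classical
  ext c
  rw [homog, Finsupp.filter_apply]
  split_ifs with hc
  · rfl
  · by_contra hc'
    exact hc (h c (Finsupp.mem_support_iff.mpr fun h0 => hc' h0.symm))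

lemma trunc_eq_zero {deg : B → ℕ} {n : ℕ} {a : B →₀ ℕ} (h : HomogD deg (n + 1) a) :
    trunc deg n a = 0 := by
  classical
  ext c
  rw [trunc, Finsupp.filter_apply]
  split_ifs with hc
  · by_contra hc'
    have := h c (Finsupp.mem_support_iff.mpr (by simpa using hc'))
    omega
  · rfl

lemma support_bdry_subset [DecidableEq B] {diff : B → B →₀ ℤ} {a : B →₀ ℕ} {c : B}
    (hc : c ∈ (bdry diff a).support) : ∃ b ∈ a.support, c ∈ (diff b).support := by
  have := Finsupp.support_sum hc
  rw [Finset.mem_biUnion] at this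
  obtain ⟨b, hb, hcb⟩ := this
  exact ⟨b, hb, Finsupp.support_smul hcb⟩

lemma homogD_bdryP [DecidableEq B] {deg : B → ℕ} {diff : B → B →₀ ℤ}
    (hd : ∀ b b', b' ∈ (diff b).support → deg b' + 1 = deg b)
    {k : ℕ} {a : B →₀ ℕ} (h : HomogD deg (k + 1) a) (α : Bool) :
    HomogD deg k (bdryP diff α a) := by
  intro c hc
  have hc' : c ∈ (bdry diff a).support := by
    have : (bdryP diff α a).support ⊆ (bdry diff a).support := by
      cases α <;> simp only [bdryP, Bool.false_eq_true, if_true, if_false] <;>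
        exact Finsupp.support_mapRange
    exact this hc
  obtain ⟨b, hb, hcb⟩ := support_bdry_subset hc'
  have := hd b c hcb
  have := h b hb
  omega

/-- Iterated one-step boundary (the Steiner table, indexed by codegree). -/
noncomputable def tblIter (diff : B → B →₀ ℤ) (α : Bool) : ℕ → (B →₀ ℕ) → (B →₀ ℕ)
  | 0, a => a
  | j + 1, a => bdryP diff α (tblIter diff α j a)

lemma tblIter_homog [DecidableEq B] {deg : B → ℕ} {diff : B → B →₀ ℤ}
    (hd : ∀ b b', b' ∈ (diff b).support → deg b' + 1 = deg b) (α : Bool) :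
    ∀ (j n : ℕ) (a : B →₀ ℕ), HomogD deg (n + j) a → HomogD deg n (tblIter diff α j a)
  | 0, n, a, h => h
  | j + 1, n, a, h => by
    have := tblIter_homog hd α j (n + 1) a
      (by rw [show n + 1 + j = n + (j + 1) from by omega]; exact h)
    exact homogD_bdryP hd this α

lemma dmapAux_eq_tblIter [DecidableEq B] {deg : B → ℕ} {diff : B → B →₀ ℤ}
    (hd : ∀ b b', b' ∈ (diff b).support → deg b' + 1 = deg b) (α : Bool) :
    ∀ (j n : ℕ) (a : B →₀ ℕ), HomogD deg (n + j) a →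
      dmapAux deg diff α n j a = tblIter diff α j a
  | 0, n, a, h => rfl
  | j + 1, n, a, h => by
    have ha : HomogD deg ((n + 1) + j) a := by
      rw [show n + 1 + j = n + (j + 1) from by omega]; exact h
    have hh := tblIter_homog hd α j (n + 1) a ha
    rw [dmapAux, dmapAux_eq_tblIter hd α j (n + 1) a ha, tblIter]
    rw [dstep, homog_eq_self hh, trunc_eq_zero hh, add_zero]

lemma degC_single {deg : B → ℕ} (b : B) : degC deg (Finsupp.single b (1 : ℕ)) = deg b := by
  rw [degC, Finsupp.support_single_ne_zero b one_ne_zero]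
  simp

lemma homogD_single {deg : B → ℕ} (b : B) : HomogD deg (deg b) (Finsupp.single b (1 : ℕ)) := by
  intro c hc
  rw [Finsupp.support_single_ne_zero b one_ne_zero, Finset.mem_singleton] at hc
  rw [hc]

lemma dmap_single [DecidableEq B] {deg : B → ℕ} {diff : B → B →₀ ℤ}
    (hd : ∀ b b', b' ∈ (diff b).support → deg b' + 1 = deg b) (α : Bool) (k : ℕ) (b : B) :
    dmap deg diff α k (Finsupp.single b 1) =
      tblIter diff α (deg b - k) (Finsupp.single b 1) := by
  rw [dmap, degC_single]
  rcases le_or_gt k (deg b) with h | h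
  · exact dmapAux_eq_tblIter hd α (deg b - k) k _ (by
      have : k + (deg b - k) = deg b := by omega
      rw [this]; exact homogD_single b)
  · have : deg b - k = 0 := by omega
    rw [this]; rfl

end Chains
namespace Chains

variable {B BM BN : Type*}

lemma bdryP_eq (diff : B → B →₀ ℤ) (α : Bool) (a : B →₀ ℕ) :
    toInt (bdryP diff α a) =
      (if α then toInt (posPart (fextHom diff (toInt a)))
       else toInt (negPart (fextHom diff (toInt a)))) := by
  cases α <;> simp [bdryP, bdry_eq]

/-- `∂⟨b⟩⁺` and `∂⟨b⟩⁻` agree at every level. -/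
lemma bdry_tblIter_eq (diff : B → B →₀ ℤ)
    (hsq : ∀ c, fextHom diff (diff c) = 0) (b0 : B) :
    ∀ j, fextHom diff (toInt (tblIter diff true j (Finsupp.single b0 1))) =
      fextHom diff (toInt (tblIter diff false j (Finsupp.single b0 1)))
  | 0 => rfl
  | j + 1 => by
    have ih := bdry_tblIter_eq diff hsq b0 j
    have hsub : toInt (tblIter diff true (j + 1) (Finsupp.single b0 1)) -
        toInt (tblIter diff false (j + 1) (Finsupp.single b0 1)) =
        fextHom diff (toInt (tblIter diff true j (Finsupp.single b0 1))) := by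
      show toInt (bdryP diff true _) - toInt (bdryP diff false _) = _
      rw [bdryP_eq, bdryP_eq, if_pos rfl, if_neg (by simp), ih]
      exact toInt_posPart_sub_negPart _
    have := congrArg (fextHom diff) hsub
    rw [map_sub, fextHom_sq diff hsq] at this
    exact sub_eq_zero.mp this

lemma toInt_tblIter_succ_sub (diff : B → B →₀ ℤ)
    (hsq : ∀ c, fextHom diff (diff c) = 0) (b0 : B) (j : ℕ) (α : Bool) :
    toInt (tblIter diff true (j + 1) (Finsupp.single b0 1)) -
      toInt (tblIter diff false (j + 1) (Finsupp.single b0 1)) =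
      fextHom diff (toInt (tblIter diff α j (Finsupp.single b0 1))) := by
  have h : ∀ α : Bool, fextHom diff (toInt (tblIter diff α j (Finsupp.single b0 1))) =
      fextHom diff (toInt (tblIter diff true j (Finsupp.single b0 1))) := by
    intro α; cases α
    · exact (bdry_tblIter_eq diff hsq b0 j).symm
    · rfl
  rw [h α]
  show toInt (bdryP diff true _) - toInt (bdryP diff false _) = _
  rw [bdryP_eq, bdryP_eq, if_pos rfl, if_neg (by simp), bdry_tblIter_eq diff hsq b0 j]
  rw [← bdry_tblIter_eq diff hsq b0 j]
  exact toInt_posPart_sub_negPart _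

lemma tblIter_succ_pos (diff : B → B →₀ ℤ)
    (hsq : ∀ c, fextHom diff (diff c) = 0) (b0 : B) (j : ℕ) (α : Bool) :
    tblIter diff true (j + 1) (Finsupp.single b0 1) =
      posPart (fextHom diff (toInt (tblIter diff α j (Finsupp.single b0 1)))) ∧
    tblIter diff false (j + 1) (Finsupp.single b0 1) =
      negPart (fextHom diff (toInt (tblIter diff α j (Finsupp.single b0 1)))) := by
  have h : ∀ β : Bool, fextHom diff (toInt (tblIter diff β j (Finsupp.single b0 1))) =
      fextHom diff (toInt (tblIter diff α j (Finsupp.single b0 1))) := by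
    intro β; cases β <;> cases α <;>
      first | rfl | exact bdry_tblIter_eq diff hsq b0 j |
        exact (bdry_tblIter_eq diff hsq b0 j).symm
  constructor
  · show bdryP diff true _ = _
    rw [bdryP, if_pos rfl, bdry_eq, h true]
  · show bdryP diff false _ = _
    rw [bdryP, if_neg (by simp), bdry_eq, h false]

lemma fextHom_toInt_nonneg {f : BM → BN →₀ ℤ} (hp : ∀ b b', 0 ≤ f b b')
    (a : BM →₀ ℕ) (c : BN) : 0 ≤ fextHom f (toInt a) c := by
  rw [fextHom_apply, Finsupp.sum_apply]
  refine Finset.sum_nonneg fun b _ => ?_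
  have : (0 : ℤ) ≤ toInt a b := by simp
  simpa using mul_nonneg this (hp b c)

end Chains
namespace Chains

variable {B BM BN : Type*}

lemma toInt_single (b : B) : toInt (Finsupp.single b 1) = Finsupp.single b (1 : ℤ) := by
  rw [toInt, Finsupp.mapRange_single]; norm_num

lemma tblIter_cmin_eq_zero [DecidableEq B] {deg : B → ℕ} {diff : B → B →₀ ℤ}
    (hd : ∀ b b', b' ∈ (diff b).support → deg b' + 1 = deg b)
    (hLF : LoopFree deg diff) (b : B) (k : ℕ) (hk : k < deg b) :
    cmin (tblIter diff false (deg b - k) (Finsupp.single b 1))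
         (tblIter diff true (deg b - k) (Finsupp.single b 1)) = 0 := by
  ext c
  simp only [cmin_apply, Finsupp.coe_zero, Pi.zero_apply]
  by_contra h
  have hc1 : c ∈ (tblIter diff false (deg b - k) (Finsupp.single b 1)).support := by
    rw [Finsupp.mem_support_iff]; omega
  have hc2 : c ∈ (tblIter diff true (deg b - k) (Finsupp.single b 1)).support := by
    rw [Finsupp.mem_support_iff]; omega
  have hhom : HomogD deg (k + (deg b - k)) (Finsupp.single b (1 : ℕ)) := by
    rw [show k + (deg b - k) = deg b from by omega]; exact homogD_single b
  have hdegc : deg c = k := tblIter_homog hd false (deg b - k) k _ hhom c hc1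
  have hself : ∀ α, dmap deg diff α k (Finsupp.single c 1) = Finsupp.single c 1 := by
    intro α; rw [dmap_single hd, hdegc, Nat.sub_self]; rfl
  have hcs : c ∈ (Finsupp.single c (1 : ℕ)).support := by simp
  have r1 : relO deg diff k b c := by
    refine ⟨le_of_lt hk, le_of_eq hdegc.symm, Finset.not_disjoint_iff.mpr ⟨c, ?_, ?_⟩⟩
    · rw [dmap_single hd]; exact hc1
    · rw [hself true]; exact hcs
  have r2 : relO deg diff k c b := by
    refine ⟨le_of_eq hdegc.symm, le_of_lt hk, Finset.not_disjoint_iff.mpr ⟨c, ?_, ?_⟩⟩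
    · rw [hself false]; exact hcs
    · rw [dmap_single hd]; exact hc2
  have := hLF k b c (Relation.ReflTransGen.single r1) (Relation.ReflTransGen.single r2)
  rw [← this] at hdegc
  omega

lemma main_step [DecidableEq BM] [DecidableEq BN]
    {degM : BM → ℕ} {diffM : BM → BM →₀ ℤ} {augM : BM → ℤ}
    {degN : BN → ℕ} {diffN : BN → BN →₀ ℤ} {augN : BN → ℤ}
    {f : BM → BN →₀ ℤ} (hf : IsADCHom degM diffM augM degN diffN augN f)
    (hMsq : ∀ c, fextHom diffM (diffM c) = 0)
    (hNsq : ∀ c, fextHom diffN (diffN c) = 0)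
    (b : BM) (b' : BN) (hb : f b = Finsupp.single b' 1) (hdeg : degN b' = degM b)
    (hdisj : ∀ k < degM b,
      cmin (posPart (fextHom f (toInt (tblIter diffM false (degM b - k) (Finsupp.single b 1)))))
           (posPart (fextHom f (toInt (tblIter diffM true (degM b - k) (Finsupp.single b 1))))) = 0) :
    ∀ j k, degM b - k ≤ j → ∀ α,
      fextHom f (toInt (tblIter diffM α (degM b - k) (Finsupp.single b 1))) =
        toInt (tblIter diffN α (degN b' - k) (Finsupp.single b' 1)) := by
  intro j
  induction j with
  | zero =>
    intro k hk α
    have h1 : degM b - k = 0 := by omega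
    have h2 : degN b' - k = 0 := by omega
    rw [h1, h2]
    show fextHom f (toInt (Finsupp.single b 1)) = toInt (Finsupp.single b' 1)
    rw [toInt_single, toInt_single, fextHom_single, one_smul, hb]
  | succ j ih =>
    intro k hk α
    rcases le_or_gt (degM b - k) j with h | h
    · exact ih k h α
    have hjk : degM b - k = j + 1 := by omega
    have hklt : k < degM b := by omega
    have hjk1 : degM b - (k + 1) = j := by omega
    have hNjk : degN b' - k = j + 1 := by omega
    have ih1 : ∀ β, fextHom f (toInt (tblIter diffM β j (Finsupp.single b 1))) =
        toInt (tblIter diffN β j (Finsupp.single b' 1)) := by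
      intro β
      have := ih (k + 1) (by omega) β
      rwa [hjk1, show degN b' - (k + 1) = j from by omega] at this
    set xN := fextHom diffN (toInt (tblIter diffN true j (Finsupp.single b' 1))) with hxN
    have hTN := tblIter_succ_pos diffN hNsq b' j true
    have hsubM := toInt_tblIter_succ_sub diffM hMsq b j true
    have hFsub : fextHom f (toInt (tblIter diffM true (j + 1) (Finsupp.single b 1))) -
        fextHom f (toInt (tblIter diffM false (j + 1) (Finsupp.single b 1))) = xN := by
      rw [← map_sub, hsubM, fextHom_comm hf, ih1 true]
    set p := posPart (fextHom f (toInt (tblIter diffM true (j + 1) (Finsupp.single b 1)))) with hp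
    set q := posPart (fextHom f (toInt (tblIter diffM false (j + 1) (Finsupp.single b 1)))) with hq
    have htp : toInt p = fextHom f (toInt (tblIter diffM true (j + 1) (Finsupp.single b 1))) :=
      toInt_posPart_of_nonneg _ (fextHom_toInt_nonneg hf.pos _)
    have htq : toInt q = fextHom f (toInt (tblIter diffM false (j + 1) (Finsupp.single b 1))) :=
      toInt_posPart_of_nonneg _ (fextHom_toInt_nonneg hf.pos _)
    have hpq : cmin p q = 0 := by
      have h0 := hdisj k hklt
      rw [hjk] at h0
      ext c
      have := Finsupp.ext_iff.mp h0 c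
      simp only [cmin_apply, Finsupp.coe_zero, Pi.zero_apply] at this ⊢
      rw [hp, hq]
      omega
    have hsub : toInt p - toInt q = xN := by rw [htp, htq]; exact hFsub
    obtain ⟨hpe, hqe⟩ := eq_posPart_negPart xN p q hsub hpq
    rw [hjk, hNjk]
    cases α
    · rw [← htq, hqe, ← hTN.2]
    · rw [← htp, hpe, ← hTN.1]

end Chains
open Chains in
/-- Characterization of quasi-rigidity: a morphism `f : M → N` of augmented directed
complexes with unitary loop-free bases is quasi-rigid if and only if for every basis
element `b` with `f(b) ≠ 0` one has `f(b) ∈ B_N` and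
`f(⟨b⟩⁻ₖ) ∧ f(⟨b⟩⁺ₖ) = 0` for all `k < deg b`. -/
theorem quasiRigid_iff {BM BN : Type*} [DecidableEq BM] [DecidableEq BN]
    (degM : BM → ℕ) (diffM : BM → BM →₀ ℤ) (augM : BM → ℤ)
    (degN : BN → ℕ) (diffN : BN → BN →₀ ℤ) (augN : BN → ℤ)
    (hM : IsADC degM diffM augM) (hN : IsADC degN diffN augN)
    (hUM : Unitary degM diffM augM) (hLFM : LoopFree degM diffM)
    (hUN : Unitary degN diffN augN) (hLFN : LoopFree degN diffN)
    (f : BM → BN →₀ ℤ)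
    (hf : IsADCHom degM diffM augM degN diffN augN f) :
    QuasiRigid degM diffM degN diffN f ↔
      ∀ b : BM, f b ≠ 0 → ∃ b' : BN, f b = Finsupp.single b' 1 ∧
        ∀ k < degM b,
          cmin (posPart (fext f (toInt (dmap degM diffM false k (Finsupp.single b 1)))))
               (posPart (fext f (toInt (dmap degM diffM true k (Finsupp.single b 1)))))
            = 0 := by
  have hdM := hM.diff_deg
  have hdN := hN.diff_deg
  have hMsq : ∀ c, fextHom diffM (diffM c) = 0 := fun c => by
    rw [fextHom_apply]; exact hM.diff_sq c
  have hNsq : ∀ c, fextHom diffN (diffN c) = 0 := fun c => by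
    rw [fextHom_apply]; exact hN.diff_sq c
  constructor
  · intro hQR b hfb
    obtain ⟨b', hb1, hb2⟩ := hQR b hfb
    have hdeg : degN b' = degM b := hf.deg_pres b b' (by
      rw [hb1, Finsupp.mem_support_iff, Finsupp.single_apply, if_pos rfl]
      exact one_ne_zero)
    refine ⟨b', hb1, fun k hk => ?_⟩
    rw [hb2 k false, hb2 k true, posPart_toInt, posPart_toInt,
      dmap_single hdN, dmap_single hdN]
    exact tblIter_cmin_eq_zero hdN hLFN b' k (by omega)
  · intro h b hfb
    obtain ⟨b', hb1, hdisj⟩ := h b hfb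
    have hdeg : degN b' = degM b := hf.deg_pres b b' (by
      rw [hb1, Finsupp.mem_support_iff, Finsupp.single_apply, if_pos rfl]
      exact one_ne_zero)
    refine ⟨b', hb1, fun k α => ?_⟩
    rw [fext_eq_fextHom, dmap_single hdM, dmap_single hdN]
    refine main_step hf hMsq hNsq b b' hb1 hdeg ?_ (degM b - k) k le_rfl α
    intro k' hk'
    have := hdisj k' hk'
    rwa [dmap_single hdM, dmap_single hdM, fext_eq_fextHom, fext_eq_fextHom] at this
end
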